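/- Let x ∈ V = {x ∈ ℤ^{n+1} : Σx_i = 0, x_i ≡ x_j (mod n+1) ∀i,j} with x ≠ 0. Then there exists an edge vector e such that h(x+e) = h(x) − 1, where h(x) = (max_i x_i − min_j x_j)/(n+1). In particular, one can take e = e(S) for S the set of coordinates achieving the minimum of x. -/

import Mathlib

open Finset

/-- The vertex set of the 1-skeleton of the Ã_n Coxeter complex:
integer vectors summing to zero with all pairwise coordinate differences divisible by n+1. -/
def inV (n : ℕ) (x : Fin (n+1) → ℤ) : Prop :=
  (∑ i, x i = 0) ∧ ∀ i j, ((n : ℤ) + 1) ∣ x i - x j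

/-- Maximum coordinate. -/
def maxC (n : ℕ) (x : Fin (n+1) → ℤ) : ℤ := univ.sup' univ_nonempty x

/-- Minimum coordinate. -/
def minC (n : ℕ) (x : Fin (n+1) → ℤ) : ℤ := univ.inf' univ_nonempty x

/-- An edge vector: coordinates sum to 0, pairwise differences divisible by n+1,
and max minus min equals n+1. -/
def isEdge (n : ℕ) (e : Fin (n+1) → ℤ) : Prop :=
  inV n e ∧ maxC n e - minC n e = (n : ℤ) + 1

/-- Height of a vertex: (max − min)/(n+1). -/
def height (n : ℕ) (x : Fin (n+1) → ℤ) : ℤ :=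
  (maxC n x - minC n x) / ((n : ℤ) + 1)

/-- The edge vector associated to a subset S: value n+1−|S| on S and −|S| off S. -/
def eVec (n : ℕ) (S : Finset (Fin (n+1))) : Fin (n+1) → ℤ :=
  fun i => if i ∈ S then (n : ℤ) + 1 - S.card else -(S.card : ℤ)

lemma inV_zero (n : ℕ) : inV n 0 := ⟨by simp, fun i j => by simp⟩

lemma maxC_neg (n : ℕ) (x : Fin (n+1) → ℤ) : maxC n (-x) = - minC n x := by
  unfold maxC minC
  apply le_antisymm
  · apply Finset.sup'_le
    intro i hi
    have h1 : univ.inf' univ_nonempty x ≤ x i := Finset.inf'_le _ hi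
    have h2 : (-x) i = -(x i) := rfl
    omega
  · obtain ⟨i, hi, h⟩ := Finset.exists_mem_eq_inf' (univ_nonempty) x
    rw [h]
    have h1 : (-x) i ≤ univ.sup' univ_nonempty (-x) := Finset.le_sup' (-x) hi
    have h2 : (-x) i = -(x i) := rfl
    omega

lemma minC_neg (n : ℕ) (x : Fin (n+1) → ℤ) : minC n (-x) = - maxC n x := by
  have := maxC_neg n (-x)
  rw [neg_neg] at this
  unfold maxC minC at *
  omega

lemma isEdge_neg {n : ℕ} {e : Fin (n+1) → ℤ} (h : isEdge n e) : isEdge n (-e) := by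
  obtain ⟨⟨h1, h2⟩, h3⟩ := h
  refine ⟨⟨by simp [h1], fun i j => by
    have h' : (-e) i - (-e) j = e j - e i := by
      simp only [Pi.neg_apply]; ring
    rw [h']; exact h2 j i⟩, ?_⟩
  rw [maxC_neg, minC_neg]
  omega

/-- The graph G on V with edge-vector adjacency. -/
def G (n : ℕ) : SimpleGraph {x : Fin (n+1) → ℤ // inV n x} where
  Adj x y := isEdge n (y.1 - x.1)
  symm := by
    constructor
    intro x y h
    have := isEdge_neg h
    rwa [neg_sub] at this
  loopless := by
    constructor
    intro x h
    obtain ⟨-, h3⟩ := h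
    rw [sub_self] at h3
    simp [maxC, minC] at h3
    omega

section

variable {n : ℕ} (x : Fin (n+1) → ℤ)

lemma minC_le (i : Fin (n+1)) : minC n x ≤ x i :=
  inf'_le _ (mem_univ i)

lemma le_maxC (i : Fin (n+1)) : x i ≤ maxC n x :=
  le_sup' _ (mem_univ i)

lemma exists_eq_minC : ∃ i, x i = minC n x := by
  obtain ⟨i, -, hi⟩ := exists_mem_eq_inf' univ_nonempty x
  exact ⟨i, hi.symm⟩

lemma exists_eq_maxC : ∃ i, x i = maxC n x := by
  obtain ⟨i, -, hi⟩ := exists_mem_eq_sup' univ_nonempty x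
  exact ⟨i, hi.symm⟩

variable {x}

lemma minC_eq_of_le {a : ℤ} (h : ∀ i, a ≤ x i) {j : Fin (n+1)} (hj : x j = a) :
    minC n x = a :=
  le_antisymm (hj ▸ minC_le x j) (le_inf' _ _ fun i _ => h i)

lemma maxC_eq_of_le {a : ℤ} (h : ∀ i, x i ≤ a) {j : Fin (n+1)} (hj : x j = a) :
    maxC n x = a :=
  le_antisymm (sup'_le _ _ fun i _ => h i) (hj ▸ le_maxC x j)

lemma minC_lt_maxC_of_sum_eq_zero (hsum : ∑ i, x i = 0) (hx0 : x ≠ 0) :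
    minC n x < maxC n x := by
  by_contra! hle
  have hconst : ∀ i, x i = minC n x := fun i =>
    le_antisymm ((le_maxC x i).trans hle) (minC_le x i)
  have hmin : minC n x = 0 := by
    simp only [hconst, sum_const, card_univ, Fintype.card_fin, nsmul_eq_mul] at hsum
    exact (mul_eq_zero.mp hsum).resolve_left (by positivity)
  exact hx0 (funext fun i => (hconst i).trans hmin)

lemma minC_add_le_of_ne (hdvd : ∀ i j, ((n : ℤ) + 1) ∣ x i - x j) {i : Fin (n+1)}
    (hi : x i ≠ minC n x) :
    minC n x + (n + 1) ≤ x i := by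
  obtain ⟨i₀, hi₀⟩ := exists_eq_minC x
  have hlt : 0 < x i - x i₀ := by have := minC_le x i; omega
  have := Int.le_of_dvd hlt (hdvd i i₀)
  omega

lemma height_eq_sub_one {y : Fin (n+1) → ℤ}
    (h : maxC n y - minC n y = maxC n x - minC n x - (n + 1)) :
    height n y = height n x - 1 := by
  have hn : ((n : ℤ) + 1) ≠ 0 := by positivity
  rw [height, height, h, sub_eq_add_neg, ← mul_neg_one, Int.add_mul_ediv_left _ _ hn]
  ring

lemma eVec_apply (S : Finset (Fin (n+1))) (i : Fin (n+1)) :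
    eVec n S i = (n + 1) * (if i ∈ S then 1 else 0) - S.card := by
  unfold eVec; split_ifs <;> ring

lemma inV_eVec (S : Finset (Fin (n+1))) : inV n (eVec n S) := by
  refine ⟨?_, fun i j => ?_⟩
  · simp only [eVec_apply, sum_sub_distrib, ← mul_sum, sum_boole, sum_const, card_univ,
      Fintype.card_fin, filter_mem_eq_inter, univ_inter, nsmul_eq_mul]
    push_cast
    ring
  · rw [eVec_apply, eVec_apply, sub_sub_sub_cancel_right, ← mul_sub]
    exact dvd_mul_right _ _

lemma maxC_eVec {S : Finset (Fin (n+1))} (hS : S.Nonempty) :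
    maxC n (eVec n S) = n + 1 - S.card := by
  obtain ⟨i, hi⟩ := hS
  refine maxC_eq_of_le (fun j => ?_) (j := i) (by simp [eVec, hi])
  unfold eVec; split_ifs <;> omega

lemma minC_eVec {S : Finset (Fin (n+1))} (hS : S ≠ univ) :
    minC n (eVec n S) = -S.card := by
  obtain ⟨i, -, hi⟩ := exists_of_ssubset (ssubset_univ_iff.mpr hS)
  refine minC_eq_of_le (fun j => ?_) (j := i) (by simp [eVec, hi])
  unfold eVec; split_ifs <;> omega

theorem isEdge_eVec {S : Finset (Fin (n+1))} (hS : S.Nonempty) (hS' : S ≠ univ) :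
    isEdge n (eVec n S) :=
  ⟨inV_eVec S, by rw [maxC_eVec hS, minC_eVec hS']; ring⟩

variable {S : Finset (Fin (n+1))}

lemma nonempty_of_mem_iff_eq_minC (hS : ∀ i, i ∈ S ↔ x i = minC n x) : S.Nonempty :=
  let ⟨i, hi⟩ := exists_eq_minC x
  ⟨i, (hS i).mpr hi⟩

lemma ne_univ_of_mem_iff_eq_minC (hS : ∀ i, i ∈ S ↔ x i = minC n x)
    (hx : inV n x) (hx0 : x ≠ 0) : S ≠ univ := by
  obtain ⟨j₀, hj₀⟩ := exists_eq_maxC x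
  have hlt := minC_lt_maxC_of_sum_eq_zero hx.1 hx0
  exact fun h => absurd ((hS j₀).mp (h ▸ mem_univ j₀)) (by omega)

/-- Off `S` the coordinates lie at least `n + 1` above the minimum, so adding `e(S)` raises the
minimum by `n + 1 - |S|` and lowers the maximum (attained off `S`) by `|S|`. -/
lemma height_add_eVec_of_mem_iff_eq_minC (hS : ∀ i, i ∈ S ↔ x i = minC n x)
    (hx : inV n x) (hx0 : x ≠ 0) :
    height n (x + eVec n S) = height n x - 1 := by
  obtain ⟨i₀, hi₀⟩ := exists_eq_minC x
  obtain ⟨j₀, hj₀⟩ := exists_eq_maxC x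
  have hlt := minC_lt_maxC_of_sum_eq_zero hx.1 hx0
  have hj₀S : j₀ ∉ S := by rw [hS]; omega
  have hgap := minC_add_le_of_ne hx.2 (i := j₀) (by omega)
  have hval : ∀ i, (x + eVec n S) i =
      if i ∈ S then minC n x + (n + 1) - S.card else x i - S.card := by
    intro i
    by_cases hi : i ∈ S
    · simp only [Pi.add_apply, eVec, if_pos hi, (hS i).mp hi]; ring
    · simp only [Pi.add_apply, eVec, if_neg hi]; ring
  have hmax : maxC n (x + eVec n S) = maxC n x - S.card := by
    refine maxC_eq_of_le (fun i => ?_) (j := j₀) (by rw [hval, if_neg hj₀S, hj₀])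
    rw [hval]; split_ifs
    · omega
    · have := le_maxC x i; omega
  have hmin : minC n (x + eVec n S) = minC n x + (n + 1) - S.card := by
    refine minC_eq_of_le (fun i => ?_) (j := i₀) (by rw [hval, if_pos ((hS i₀).mpr hi₀)])
    rw [hval]; split_ifs with hi
    · exact le_rfl
    · have := minC_add_le_of_ne hx.2 (i := i) (by rwa [hS] at hi); omega
  exact height_eq_sub_one (by rw [hmax, hmin]; ring)

end

theorem stmt5_general (n : ℕ) (x : Fin (n+1) → ℤ)
    (hx : inV n x) (hx0 : x ≠ 0) :
    (∃ e : Fin (n+1) → ℤ, isEdge n e ∧ height n (x + e) = height n x - 1) ∧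
    (isEdge n (eVec n (univ.filter fun i => x i = minC n x)) ∧
      height n (x + eVec n (univ.filter fun i => x i = minC n x)) = height n x - 1) := by
  set S := univ.filter fun i => x i = minC n x
  have hS : ∀ i, i ∈ S ↔ x i = minC n x := fun i => by simp [S]
  have hEdge : isEdge n (eVec n S) :=
    isEdge_eVec (nonempty_of_mem_iff_eq_minC hS) (ne_univ_of_mem_iff_eq_minC hS hx hx0)
  have hHeight := height_add_eVec_of_mem_iff_eq_minC hS hx hx0
  exact ⟨⟨_, hEdge, hHeight⟩, hEdge, hHeight⟩

/-- for a nonzero vertex there is an edge vector decreasing height;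
one can take e(S) for S the set of minimal coordinates. -/
theorem stmt5 (n : ℕ) (hn : 1 ≤ n) (x : Fin (n+1) → ℤ)
    (hx : inV n x) (hx0 : x ≠ 0) :
    (∃ e : Fin (n+1) → ℤ, isEdge n e ∧ height n (x + e) = height n x - 1) ∧
    (isEdge n (eVec n (univ.filter fun i => x i = minC n x)) ∧
      height n (x + eVec n (univ.filter fun i => x i = minC n x)) = height n x - 1) :=
  stmt5_general n x hx hx0
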